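/- arXiv:2212.11689 — 4 statements merged into one kernel-verified Lean document; each statement's English description precedes it below -/
import Mathlib

section
/- For a positive integer d, let γᵢ = i(d+1) − 1 for 1 ≤ i ≤ d. Then the set M(d) = {n ∈ ℕ⁺ : d ≼₁ n} of floor multiples of d equals the set of all nonzero nonnegative-integer combinations of γ₁, γ₂, …, γ_d, and this generating set is minimal: for each i, γᵢ is not a nonnegative-integer combination of the remaining generators {γⱼ : j ≠ i}. -/
/-- `d` is a floor quotient of `n`: `d = ⌊n/k⌋` for some positive integer `k`. -/
def FloorQuotient (d n : ℕ) : Prop := ∃ k : ℕ, 0 < k ∧ d = n / k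

/-! With `s = ∑ cⱼ` and `m = ∑ cⱼ j`, the combination `∑ cⱼ γⱼ` equals `m (d + 1) - s`, and the
pairs `(s, m)` that occur are exactly those with `s ≤ m ≤ s d`. On the other side, `d = ⌊n/k⌋`
means `n = k (d + 1) - s` with `1 ≤ s ≤ k`, and the largest such `k`, namely `⌊n/d⌋`, also
satisfies `k ≤ s d`. For minimality, `γᵢ + s = m (d + 1)` with `s ≤ m` forces `s = 1` and `m = i`,
so the combination is a single generator `γₘ = γᵢ`. -/

open Finset

section Coefficients

variable {S : Finset ℕ} (c : ℕ → ℕ)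

theorem sum_mul_sub_one_add_sum (hS : ∀ j ∈ S, 1 ≤ j) (d : ℕ) :
    ∑ j ∈ S, c j * (j * (d + 1) - 1) + ∑ j ∈ S, c j = (∑ j ∈ S, c j * j) * (d + 1) := by
  rw [← sum_add_distrib, sum_mul]
  refine sum_congr rfl fun j hj => ?_
  have : 1 ≤ j * (d + 1) := Nat.mul_pos (hS j hj) d.succ_pos
  rw [← mul_add_one, Nat.sub_add_cancel this, mul_assoc]

theorem sum_le_sum_mul_self (hS : ∀ j ∈ S, 1 ≤ j) : ∑ j ∈ S, c j ≤ ∑ j ∈ S, c j * j :=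
  sum_le_sum fun j hj => Nat.le_mul_of_pos_right _ (hS j hj)

theorem sum_mul_self_le_sum_mul {d : ℕ} (hS : ∀ j ∈ S, j ≤ d) :
    ∑ j ∈ S, c j * j ≤ (∑ j ∈ S, c j) * d := by
  rw [sum_mul]
  exact sum_le_sum fun j hj => Nat.mul_le_mul_left _ (hS j hj)

end Coefficients

theorem sum_mul_self_mem_of_sum_eq_one {S : Finset ℕ} {c : ℕ → ℕ} (h : ∑ j ∈ S, c j = 1) :
    ∑ j ∈ S, c j * j ∈ S := by
  obtain ⟨j₀, hj₀, hne⟩ := exists_ne_zero_of_sum_ne_zero (h ▸ one_ne_zero)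
  rw [← add_sum_erase S c hj₀] at h
  have hrest : ∑ j ∈ S.erase j₀, c j = 0 := by omega
  rw [← add_sum_erase S _ hj₀, sum_eq_zero fun j hj => by simp [sum_eq_zero_iff.mp hrest j hj]]
  simpa [show c j₀ = 1 by omega]

theorem exists_sum_eq_and_sum_mul_self_eq {d s m : ℕ} (hsm : s ≤ m) (hmd : m ≤ s * d) :
    ∃ c : ℕ → ℕ, ∑ j ∈ Icc 1 d, c j = s ∧ ∑ j ∈ Icc 1 d, c j * j = m := by
  induction s generalizing m with
  | zero => exact ⟨0, by simp, by rw [zero_mul, Nat.le_zero] at hmd; simp [hmd]⟩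
  | succ s ih =>
    -- split off one part `j₀ ∈ [1, d]` such that `m - j₀ ∈ [s, s d]`
    have hmd' : m ≤ s * d + d := by linarith [add_one_mul s d]
    have hd : 0 < d := Nat.pos_of_ne_zero (by rintro rfl; omega)
    have hsd : s ≤ s * d := Nat.le_mul_of_pos_right s hd
    have hj₀ : max 1 (m - s * d) ∈ Icc 1 d := mem_Icc.mpr ⟨le_max_left _ _, by omega⟩
    obtain ⟨c, hs, hm⟩ := ih (m := m - max 1 (m - s * d)) (by omega) (by omega)
    refine ⟨fun j => c j + if j = max 1 (m - s * d) then 1 else 0, ?_, ?_⟩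
    · simp [sum_add_distrib, hs, hj₀]
    · simp only [add_mul, ite_mul, one_mul, zero_mul, sum_add_distrib, hm, sum_ite_eq', hj₀,
        ↓reduceIte]
      omega

theorem exists_eq_sum_mul_sub_one_iff (d n : ℕ) :
    (∃ c : ℕ → ℕ, n = ∑ j ∈ Icc 1 d, c j * (j * (d + 1) - 1)) ↔
      ∃ s m, s ≤ m ∧ m ≤ s * d ∧ n + s = m * (d + 1) := by
  have hS : ∀ j ∈ Icc 1 d, 1 ≤ j := fun j hj => (mem_Icc.mp hj).1
  constructor
  · rintro ⟨c, rfl⟩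
    exact ⟨_, _, sum_le_sum_mul_self c hS,
      sum_mul_self_le_sum_mul c fun j hj => (mem_Icc.mp hj).2, sum_mul_sub_one_add_sum c hS d⟩
  · rintro ⟨s, m, hsm, hmd, h⟩
    obtain ⟨c, rfl, rfl⟩ := exists_sum_eq_and_sum_mul_self_eq hsm hmd
    exact ⟨c, by have := sum_mul_sub_one_add_sum c hS d; omega⟩

namespace FloorQuotient

theorem of_add_eq_mul {d n s m : ℕ} (hs : 1 ≤ s) (hsm : s ≤ m) (h : n + s = m * (d + 1)) :
    FloorQuotient d n :=
  ⟨m, by omega, (Nat.div_eq_of_lt_le (by nlinarith) (by nlinarith)).symm⟩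

theorem exists_add_eq_mul {d n : ℕ} (hd : 0 < d) (h : FloorQuotient d n) :
    ∃ s m, s ≤ m ∧ m ≤ s * d ∧ n + s = m * (d + 1) := by
  obtain ⟨k, hk, hdk⟩ := h
  have hlo : d * k ≤ n := by rw [hdk]; exact Nat.div_mul_le_self n k
  have hhi : n < (d + 1) * k := (Nat.div_lt_iff_lt_mul hk).mp (by omega)
  have hkK : k ≤ n / d := (Nat.le_div_iff_mul_le hd).mpr (by linarith)
  have hdiv := Nat.div_add_mod n d
  have hrd := Nat.mod_lt n hd
  generalize n / d = K at hkK hdiv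
  generalize n % d = r at hdiv hrd
  have hrk : r < k := by nlinarith
  -- take `k = n / d`, the largest `k` with `n / k = d`
  refine ⟨K - r, K, by omega, ?_, by rw [← hdiv]; ring_nf; omega⟩
  obtain ⟨t, rfl⟩ : ∃ t, K = t + r + 1 := ⟨K - r - 1, by omega⟩
  rw [show t + r + 1 - r = t + 1 by omega]
  nlinarith

end FloorQuotient

theorem floorQuotient_iff {d n : ℕ} (hd : 0 < d) (hn : 0 < n) :
    FloorQuotient d n ↔ ∃ s m, s ≤ m ∧ m ≤ s * d ∧ n + s = m * (d + 1) := by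
  refine ⟨FloorQuotient.exists_add_eq_mul hd, fun ⟨s, m, hsm, hmd, h⟩ => ?_⟩
  have hs : s ≠ 0 := by rintro rfl; rw [zero_mul, Nat.le_zero] at hmd; subst hmd; omega
  exact FloorQuotient.of_add_eq_mul (Nat.one_le_iff_ne_zero.mpr hs) hsm h

theorem eq_one_and_eq_of_mul_sub_one_add_eq {d i s m : ℕ} (hi : 1 ≤ i) (hid : i ≤ d)
    (hsm : s ≤ m) (h : i * (d + 1) - 1 + s = m * (d + 1)) : s = 1 ∧ m = i := by
  have h' : i * (d + 1) + s = m * (d + 1) + 1 := by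
    have : 1 ≤ i * (d + 1) := by nlinarith
    omega
  rcases lt_trichotomy m i with hlt | rfl | hgt
  · nlinarith
  · omega
  · obtain ⟨t, rfl⟩ : ∃ t, m = i + t + 1 := ⟨m - i - 1, by omega⟩
    nlinarith

theorem not_exists_mul_sub_one_eq_sum_erase {d i : ℕ} (hi : i ∈ Icc 1 d) :
    ¬ ∃ c : ℕ → ℕ, i * (d + 1) - 1 = ∑ j ∈ (Icc 1 d).erase i, c j * (j * (d + 1) - 1) := by
  rintro ⟨c, hc⟩
  have hS : ∀ j ∈ (Icc 1 d).erase i, 1 ≤ j := fun j hj => (mem_Icc.mp (mem_of_mem_erase hj)).1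
  obtain ⟨hs, hm⟩ := eq_one_and_eq_of_mul_sub_one_add_eq (mem_Icc.mp hi).1 (mem_Icc.mp hi).2
    (sum_le_sum_mul_self c hS) (hc ▸ sum_mul_sub_one_add_sum c hS d)
  simpa [hm] using sum_mul_self_mem_of_sum_eq_one hs

theorem floor_multiples_minimal_generators (d : ℕ) (hd : 0 < d) :
    (∀ n : ℕ, 0 < n →
      (FloorQuotient d n ↔
        ∃ c : ℕ → ℕ, n = ∑ i ∈ Finset.Icc 1 d, c i * (i * (d + 1) - 1))) ∧
    (∀ i ∈ Finset.Icc 1 d,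
      ¬ ∃ c : ℕ → ℕ,
        i * (d + 1) - 1 = ∑ j ∈ (Finset.Icc 1 d).erase i, c j * (j * (d + 1) - 1)) :=
  ⟨fun _ hn => (floorQuotient_iff hd hn).trans (exists_eq_sum_mul_sub_one_iff _ _).symm,
    fun _ hi => not_exists_mul_sub_one_eq_sum_erase hi⟩
end

section
/- Fix a positive integer n and define J_n(k) = ⌊n/k⌋ for 1 ≤ k ≤ n. Then for every integer k with 1 ≤ k ≤ n, one has J_n(J_n(k)) = k if and only if k is a floor quotient of n. In particular, J_n restricted to the set {d : d ≼₁ n} is an involution, and this set is the largest subset of {1, …, n} on which J_n acts as an involution. -/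
/-- With `q = n / k`: `k * q ≤ n` gives `k ≤ n / q`, hence `n / (n / q) ≤ n / k = q`,
while `q * (n / q) ≤ n` gives `q ≤ n / (n / q)`. -/
theorem Nat.div_div_div_self (n k : ℕ) : n / (n / (n / k)) = n / k := by
  rcases Nat.eq_zero_or_pos (n / k) with hq | hq
  · simp [hq]
  have hk : 0 < k := Nat.pos_of_ne_zero fun h => by simp [h] at hq
  have hk_le : k ≤ n / (n / k) := (Nat.le_div_iff_mul_le hq).mpr (Nat.mul_div_le n k)
  apply le_antisymm
  · exact Nat.div_le_div_left hk_le hk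
  · exact (Nat.le_div_iff_mul_le (Nat.div_pos (Nat.div_le_self n _) hq)).mpr
      (Nat.mul_div_le n _)

theorem FloorQuotient.div_div_self {d n : ℕ} (h : FloorQuotient d n) : n / (n / d) = d := by
  obtain ⟨k, -, rfl⟩ := h
  exact Nat.div_div_div_self n k

theorem FloorQuotient.of_div_div_self {k n : ℕ} (hk : 0 < k) (h : n / (n / k) = k) :
    FloorQuotient k n := by
  refine ⟨n / k, Nat.pos_of_ne_zero fun h0 => ?_, h.symm⟩
  rw [h0, Nat.div_zero] at h
  omega

theorem floorQuotient_iff_div_div_self {k n : ℕ} (hk : 0 < k) :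
    FloorQuotient k n ↔ n / (n / k) = k :=
  ⟨FloorQuotient.div_div_self, FloorQuotient.of_div_div_self hk⟩

theorem floor_reciprocal_involution_iff_general (n : ℕ) :
    (∀ k : ℕ, 1 ≤ k → k ≤ n → (n / (n / k) = k ↔ FloorQuotient k n)) ∧
    (∀ d : ℕ, FloorQuotient d n → n / (n / d) = d) ∧
    (∀ S : Set ℕ, S ⊆ Set.Icc 1 n → (∀ k ∈ S, n / (n / k) = k) →
      S ⊆ {d : ℕ | FloorQuotient d n}) := by
  refine ⟨fun k hk _ => (floorQuotient_iff_div_div_self hk).symm,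
    fun d => FloorQuotient.div_div_self, fun S hS hinv k hkS => ?_⟩
  exact FloorQuotient.of_div_div_self (hS hkS).1 (hinv k hkS)

theorem floor_reciprocal_involution_iff (n : ℕ) (hn : 0 < n) :
    (∀ k : ℕ, 1 ≤ k → k ≤ n → (n / (n / k) = k ↔ FloorQuotient k n)) ∧
    (∀ d : ℕ, FloorQuotient d n → n / (n / d) = d) ∧
    (∀ S : Set ℕ, S ⊆ Set.Icc 1 n → (∀ k ∈ S, n / (n / k) = k) →
      S ⊆ {d : ℕ | FloorQuotient d n}) :=
  floor_reciprocal_involution_iff_general n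
end

section
/- Let n be a positive integer and set s = ⌊√n⌋. Let Q⁻(n) = {d : d ≼₁ n, d ≤ √n} and Q⁺(n) = {d : d ≼₁ n, ⌊n/d⌋ ≤ √n}. Then: (a) {d : d ≼₁ n} = Q⁻(n) ∪ Q⁺(n), and the map d ↦ ⌊n/d⌋ restricts to a bijection from Q⁺(n) onto Q⁻(n) and to a bijection from Q⁻(n) onto Q⁺(n); (b) Q⁻(n) = {1, 2, …, s} and Q⁺(n) = {⌊n/k⌋ : 1 ≤ k ≤ s}; and the intersection Q⁻(n) ∩ Q⁺(n) equals {s} if s² ≤ n < s(s+1), and is empty if s(s+1) ≤ n < (s+1)². -/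
/-!
The map `d ↦ n / d` is an involution on the floor quotients of `n`: if `d = n / k` then
`k ≤ n / d`, whence `n / (n / d) = d` by squeezing. A floor quotient `d` cannot have both `d` and
`n / d` above `√n`, since `d * (n / d) ≤ n < (√n + 1)²`; so the involution swaps the two halves.
Every `d ≤ √n` is a floor quotient because the remainder of `n` modulo `d` is smaller than
`n / d`, and both halves meet only in `√n`, which lies in both iff `n / √n = √n`.
-/

namespace Nat

theorem le_div_div_self {n k : ℕ} (h : 0 < n / k) : k ≤ n / (n / k) :=
  (le_div_iff_mul_le h).2 (by rw [mul_comm]; exact div_mul_le_self n k)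

variable {n d : ℕ}

theorem sqrt_le_div_of_le_sqrt (hd : 0 < d) (hds : d ≤ sqrt n) : sqrt n ≤ n / d :=
  (le_div_iff_mul_le hd).2 ((Nat.mul_le_mul_left _ hds).trans (sqrt_le n))

theorem div_div_self_of_le_sqrt (hd : 0 < d) (hds : d ≤ sqrt n) : n / (n / d) = d := by
  have hq : sqrt n ≤ n / d := sqrt_le_div_of_le_sqrt hd hds
  have hr : n % d < d := mod_lt n hd
  have hn : d * (n / d) + n % d = n := div_add_mod n d
  refine Nat.div_eq_of_lt_le (by rw [mul_comm]; exact div_mul_le_self n d) ?_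
  nlinarith

theorem le_sqrt_or_div_le_sqrt : d ≤ sqrt n ∨ n / d ≤ sqrt n := by
  by_contra! h
  have : (sqrt n + 1) * (sqrt n + 1) ≤ d * (n / d) := Nat.mul_le_mul h.1 h.2
  have := mul_div_le n d
  have : n < (sqrt n + 1) * (sqrt n + 1) := lt_succ_sqrt n
  omega

theorem eq_sqrt_of_le_sqrt_of_div_le_sqrt (hd : 0 < d) (h₁ : d ≤ sqrt n) (h₂ : n / d ≤ sqrt n) :
    d = sqrt n := by
  have hq : n / d = sqrt n := le_antisymm h₂ (sqrt_le_div_of_le_sqrt hd h₁)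
  refine le_antisymm h₁ (not_lt.1 fun hlt => ?_)
  have : n < (n / d + 1) * d := (div_lt_iff_lt_mul hd).1 (lt_succ_self _)
  nlinarith [sqrt_le n]

theorem div_sqrt_le_sqrt_iff : 0 < sqrt n ∧ n / sqrt n ≤ sqrt n ↔ n < sqrt n * (sqrt n + 1) := by
  constructor
  · rintro ⟨hs, h⟩
    rw [mul_comm]
    exact (div_lt_iff_lt_mul hs).1 (lt_succ_of_le h)
  · intro h
    have hs : 0 < sqrt n := pos_of_ne_zero fun h0 => by simp [h0] at h
    exact ⟨hs, le_of_lt_succ ((div_lt_iff_lt_mul hs).2 (by rwa [mul_comm]))⟩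

end Nat

open Nat

namespace FloorQuotient

variable {d n : ℕ}

theorem div (n : ℕ) {k : ℕ} (hk : 0 < k) : FloorQuotient (n / k) n := ⟨k, hk, rfl⟩

theorem le (h : FloorQuotient d n) : d ≤ n := by
  obtain ⟨k, -, rfl⟩ := h
  exact div_le_self n k

theorem div_div_self_s9 (h : FloorQuotient d n) (hd : 0 < d) : n / (n / d) = d := by
  obtain ⟨k, hk, rfl⟩ := h
  have h₁ : k ≤ n / (n / k) := le_div_div_self hd
  exact le_antisymm (div_le_div_left h₁ hk) (le_div_div_self (hk.trans_le h₁))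

theorem of_le_sqrt (hd : 0 < d) (hds : d ≤ sqrt n) : FloorQuotient d n :=
  ⟨n / d, hd.trans_le (hds.trans (sqrt_le_div_of_le_sqrt hd hds)),
    (div_div_self_of_le_sqrt hd hds).symm⟩

end FloorQuotient

/-- `Q⁻(n)`. -/
def lowerFloorQuotients (n : ℕ) : Set ℕ := {d | 0 < d ∧ FloorQuotient d n ∧ d ≤ sqrt n}

/-- `Q⁺(n)`. -/
def upperFloorQuotients (n : ℕ) : Set ℕ := {d | 0 < d ∧ FloorQuotient d n ∧ n / d ≤ sqrt n}

section

variable (n : ℕ)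

theorem setOf_floorQuotient_eq_union :
    {d | 0 < d ∧ FloorQuotient d n} = lowerFloorQuotients n ∪ upperFloorQuotients n := by
  ext d
  constructor
  · rintro ⟨hd, hq⟩
    exact le_sqrt_or_div_le_sqrt.imp (⟨hd, hq, ·⟩) (⟨hd, hq, ·⟩)
  · rintro (⟨hd, hq, -⟩ | ⟨hd, hq, -⟩) <;> exact ⟨hd, hq⟩

theorem lowerFloorQuotients_eq_Icc : lowerFloorQuotients n = Set.Icc 1 (sqrt n) := by
  ext d
  constructor
  · rintro ⟨hd, -, hds⟩
    exact ⟨hd, hds⟩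
  · rintro ⟨hd, hds⟩
    exact ⟨hd, FloorQuotient.of_le_sqrt hd hds, hds⟩

theorem mapsTo_div_upper_lower :
    Set.MapsTo (n / ·) (upperFloorQuotients n) (lowerFloorQuotients n) :=
  fun _ ⟨hd, hq, h⟩ => ⟨div_pos hq.le hd, FloorQuotient.div n hd, h⟩

theorem mapsTo_div_lower_upper :
    Set.MapsTo (n / ·) (lowerFloorQuotients n) (upperFloorQuotients n) := by
  rintro d ⟨hd, hq, hds⟩
  refine ⟨hd.trans_le (hds.trans (sqrt_le_div_of_le_sqrt hd hds)), FloorQuotient.div n hd, ?_⟩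
  rwa [hq.div_div_self_s9 hd]

theorem invOn_div_upper_lower :
    Set.InvOn (n / ·) (n / ·) (upperFloorQuotients n) (lowerFloorQuotients n) :=
  ⟨fun _ ⟨hd, hq, _⟩ => hq.div_div_self_s9 hd, fun _ ⟨hd, hq, _⟩ => hq.div_div_self_s9 hd⟩

theorem bijOn_div_upper_lower :
    Set.BijOn (n / ·) (upperFloorQuotients n) (lowerFloorQuotients n) :=
  (invOn_div_upper_lower n).bijOn (mapsTo_div_upper_lower n) (mapsTo_div_lower_upper n)

theorem bijOn_div_lower_upper :
    Set.BijOn (n / ·) (lowerFloorQuotients n) (upperFloorQuotients n) :=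
  (invOn_div_upper_lower n).symm.bijOn (mapsTo_div_lower_upper n) (mapsTo_div_upper_lower n)

theorem upperFloorQuotients_eq_image :
    upperFloorQuotients n = (n / ·) '' Set.Icc 1 (sqrt n) := by
  rw [← lowerFloorQuotients_eq_Icc, (bijOn_div_lower_upper n).image_eq]

theorem lowerFloorQuotients_inter_upperFloorQuotients :
    lowerFloorQuotients n ∩ upperFloorQuotients n =
      if n < sqrt n * (sqrt n + 1) then {sqrt n} else ∅ := by
  ext d
  have hmem : d ∈ lowerFloorQuotients n ∩ upperFloorQuotients n ↔
      d = sqrt n ∧ 0 < sqrt n ∧ n / sqrt n ≤ sqrt n := by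
    constructor
    · rintro ⟨⟨hd, -, h₁⟩, -, -, h₂⟩
      obtain rfl := eq_sqrt_of_le_sqrt_of_div_le_sqrt hd h₁ h₂
      exact ⟨rfl, hd, h₂⟩
    · rintro ⟨rfl, hs, h⟩
      have hq := FloorQuotient.of_le_sqrt hs le_rfl
      exact ⟨⟨hs, hq, le_rfl⟩, hs, hq, h⟩
  rw [hmem, div_sqrt_le_sqrt_iff]
  split_ifs with h <;> simp [h]

end

theorem initial_interval_complementation_general (n : ℕ) :
    let s := Nat.sqrt n
    let Qminus : Set ℕ := {d | 0 < d ∧ FloorQuotient d n ∧ d ≤ s}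
    let Qplus : Set ℕ := {d | 0 < d ∧ FloorQuotient d n ∧ n / d ≤ s}
    ({d : ℕ | 0 < d ∧ FloorQuotient d n} = Qminus ∪ Qplus) ∧
    Set.BijOn (fun d => n / d) Qplus Qminus ∧
    Set.BijOn (fun d => n / d) Qminus Qplus ∧
    (Qminus = Set.Icc 1 s) ∧
    (Qplus = (fun k => n / k) '' Set.Icc 1 s) ∧
    (Qminus ∩ Qplus = if n < s * (s + 1) then {s} else (∅ : Set ℕ)) :=
  ⟨setOf_floorQuotient_eq_union n, bijOn_div_upper_lower n, bijOn_div_lower_upper n,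
    lowerFloorQuotients_eq_Icc n, upperFloorQuotients_eq_image n,
    lowerFloorQuotients_inter_upperFloorQuotients n⟩

theorem initial_interval_complementation (n : ℕ) (hn : 0 < n) :
    let s := Nat.sqrt n
    let Qminus : Set ℕ := {d | 0 < d ∧ FloorQuotient d n ∧ d ≤ s}
    let Qplus : Set ℕ := {d | 0 < d ∧ FloorQuotient d n ∧ n / d ≤ s}
    ({d : ℕ | 0 < d ∧ FloorQuotient d n} = Qminus ∪ Qplus) ∧
    Set.BijOn (fun d => n / d) Qplus Qminus ∧
    Set.BijOn (fun d => n / d) Qminus Qplus ∧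
    (Qminus = Set.Icc 1 s) ∧
    (Qplus = (fun k => n / k) '' Set.Icc 1 s) ∧
    (Qminus ∩ Qplus = if n < s * (s + 1) then {s} else (∅ : Set ℕ)) :=
  initial_interval_complementation_general n
end

section
/- Fix a positive integer n. For all integers k, ℓ with 1 ≤ ℓ ≤ k ≤ ⌊√n⌋, the Möbius function μ₁ of the floor quotient partial order satisfies μ₁(⌊n/k⌋, ⌊n/ℓ⌋) = μ(k/ℓ) if ℓ divides k, and μ₁(⌊n/k⌋, ⌊n/ℓ⌋) = 0 if ℓ does not divide k, where μ denotes the classical number-theoretic Möbius function. In particular |μ₁(⌊n/k⌋, ⌊n/ℓ⌋)| ≤ 1 for all such k, ℓ. -/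
open ArithmeticFunction Finset
open scoped ArithmeticFunction.Moebius

namespace ArithmeticFunction

theorem eq_moebius_on {R : Type*} [Ring R] {s : Set ℕ} (hs : ∀ m n, m ∣ n → n ∈ s → m ∈ s)
    {f : ℕ → R} (hf : ∀ n > 0, n ∈ s → ∑ d ∈ n.divisors, f d = if n = 1 then 1 else 0)
    {n : ℕ} (hn : 0 < n) (hns : n ∈ s) : f n = μ n := by
  have hf' : ∀ n > 0, n ∈ s → ∑ d ∈ n.divisors, f d = (1 : ArithmeticFunction R) n := by
    simpa only [one_apply] using hf
  rw [← (sum_eq_iff_sum_mul_moebius_eq_on s hs).1 hf' n hn hns]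
  simp only [← intCoe_apply]
  rw [← mul_apply, mul_one]

end ArithmeticFunction

namespace Nat

theorem divisors_filter_div_dvd {k u : ℕ} (hk : k ≠ 0) (hu : u ∣ k) :
    {j ∈ k.divisors | k / u ∣ j} = u.divisors.image (k / ·) := by
  obtain ⟨c, rfl⟩ : ∃ c, k = c * u := ⟨k / u, (Nat.div_mul_cancel hu).symm⟩
  have hc : 0 < c := Nat.pos_of_ne_zero (left_ne_zero_of_mul hk)
  have hu0 : 0 < u := Nat.pos_of_ne_zero (right_ne_zero_of_mul hk)
  rw [Nat.mul_div_cancel _ hu0]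
  ext j
  simp only [mem_filter, mem_divisors, mem_image]
  constructor
  · rintro ⟨⟨hj, -⟩, t, rfl⟩
    have ht : t ∣ u := (Nat.mul_dvd_mul_iff_left hc).1 hj
    refine ⟨u / t, ⟨Nat.div_dvd_of_dvd ht, hu0.ne'⟩, ?_⟩
    rw [Nat.mul_div_assoc _ (Nat.div_dvd_of_dvd ht), Nat.div_div_self ht hu0.ne']
  · rintro ⟨v, ⟨hv, -⟩, rfl⟩
    rw [Nat.mul_div_assoc _ hv]
    exact ⟨⟨mul_dvd_mul_left c (Nat.div_dvd_of_dvd hv), hk⟩, dvd_mul_right c _⟩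

theorem div_lt_div_of_lt_of_le_sqrt {n a b : ℕ} (ha : 0 < a) (hab : a < b) (has : a ≤ n.sqrt) :
    n / b < n / a := by
  rw [Nat.lt_iff_add_one_le, Nat.le_div_iff_mul_le ha]
  have hq : n / b * b ≤ n := Nat.div_mul_le_self n b
  have haa : a * a ≤ n := Nat.le_sqrt.1 has
  -- with `q = ⌊n/b⌋`: if `a ≤ q` then `(q+1)a ≤ q(a+1) ≤ qb`, otherwise `(q+1)a ≤ a²`
  rcases le_or_gt a (n / b) with h | h <;> nlinarith

theorem le_of_div_le_div_of_le_sqrt {n a b : ℕ} (ha : 0 < a) (has : a ≤ n.sqrt)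
    (h : n / a ≤ n / b) : b ≤ a :=
  not_lt.1 fun hab => (div_lt_div_of_lt_of_le_sqrt ha hab has).not_ge h

theorem div_injOn_Icc_sqrt (n : ℕ) : Set.InjOn (n / ·) (Set.Icc 1 n.sqrt) :=
  fun _ ha _ hb h => le_antisymm (le_of_div_le_div_of_le_sqrt hb.1 hb.2 h.ge)
    (le_of_div_le_div_of_le_sqrt ha.1 ha.2 h.le)

end Nat

namespace FloorQuotient

theorem div_of_dvd (n : ℕ) {j ℓ : ℕ} (hj : 0 < j) (hℓj : ℓ ∣ j) : FloorQuotient (n / j) (n / ℓ) :=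
  ⟨j / ℓ, Nat.div_pos (Nat.le_of_dvd hj hℓj) (Nat.pos_of_dvd_of_pos hℓj hj),
    by rw [Nat.div_div_eq_div_mul, Nat.mul_div_cancel' hℓj]⟩

variable {n k : ℕ}

theorem div_iff_dvd {j : ℕ} (hj : 0 < j) (hk : 0 < k) (hks : k ≤ n.sqrt) :
    FloorQuotient (n / k) (n / j) ↔ j ∣ k := by
  refine ⟨fun ⟨m, hm, h⟩ => ?_, div_of_dvd n hk⟩
  rw [Nat.div_div_eq_div_mul] at h
  have hle : j * m ≤ k := Nat.le_of_div_le_div_of_le_sqrt hk hks h.le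
  have hge : k ≤ j * m := Nat.le_of_div_le_div_of_le_sqrt (Nat.mul_pos hj hm) (hle.trans hks) h.ge
  exact ⟨m, le_antisymm hge hle⟩

open scoped Classical in
theorem interval_eq_image {ℓ : ℕ} (hℓ : 0 < ℓ) (hk : 0 < k) (hks : k ≤ n.sqrt) :
    {e ∈ Icc (n / k) (n / ℓ) | FloorQuotient (n / k) e ∧ FloorQuotient e (n / ℓ)} =
      {j ∈ k.divisors | ℓ ∣ j}.image (n / ·) := by
  ext e
  simp only [mem_filter, mem_image, mem_Icc, Nat.mem_divisors]
  constructor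
  · rintro ⟨-, hke, m, hm, rfl⟩
    rw [Nat.div_div_eq_div_mul] at hke ⊢
    exact ⟨ℓ * m, ⟨⟨(div_iff_dvd (Nat.mul_pos hℓ hm) hk hks).1 hke, hk.ne'⟩, dvd_mul_right ℓ m⟩,
      rfl⟩
  · rintro ⟨j, ⟨⟨hjk, -⟩, hℓj⟩, rfl⟩
    have hj : 0 < j := Nat.pos_of_dvd_of_pos hjk hk
    exact ⟨⟨Nat.div_le_div_left (Nat.le_of_dvd hk hjk) hj, Nat.div_le_div_left
      (Nat.le_of_dvd hj hℓj) hℓ⟩, (div_iff_dvd hj hk hks).2 hjk, div_of_dvd n hj hℓj⟩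

open scoped Classical in
theorem sum_interval_eq_sum_divisors {M : Type*} [AddCommMonoid M] (F : ℕ → M) {u : ℕ}
    (hk : 0 < k) (hks : k ≤ n.sqrt) (hu : u ∣ k) :
    ∑ e ∈ Icc (n / k) (n / (k / u)) with
        FloorQuotient (n / k) e ∧ FloorQuotient e (n / (k / u)), F e =
      ∑ v ∈ u.divisors, F (n / (k / v)) := by
  have hku : 0 < k / u := Nat.div_pos (Nat.le_of_dvd hk hu) (Nat.pos_of_dvd_of_pos hu hk)
  rw [interval_eq_image hku hk hks, Nat.divisors_filter_div_dvd hk.ne' hu, image_image]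
  refine sum_image fun v hv w hw h => ?_
  have hvk : v ∣ k := (Nat.dvd_of_mem_divisors hv).trans hu
  have hwk : w ∣ k := (Nat.dvd_of_mem_divisors hw).trans hu
  have hmem {x : ℕ} (hx : x ∣ k) : k / x ∈ Set.Icc 1 n.sqrt :=
    ⟨Nat.div_pos (Nat.le_of_dvd hk hx) (Nat.pos_of_dvd_of_pos hx hk),
      (Nat.div_le_self k x).trans hks⟩
  rw [← Nat.div_div_self hvk hk.ne', ← Nat.div_div_self hwk hk.ne',
    Nat.div_injOn_Icc_sqrt n (hmem hvk) (hmem hwk) h]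

end FloorQuotient

open scoped Classical in
theorem floorQuotient_moebius_eq_moebius_div (μ₁ : ℕ → ℕ → ℤ) (hrefl : ∀ d : ℕ, 0 < d → μ₁ d d = 1)
    (hrec : ∀ d n : ℕ, 0 < d → FloorQuotient d n → d ≠ n →
      ∑ e ∈ (Finset.Icc d n).filter
        (fun e => FloorQuotient d e ∧ FloorQuotient e n), μ₁ d e = 0)
    {n k ℓ : ℕ} (hk : 0 < k) (hks : k ≤ n.sqrt) (hℓk : ℓ ∣ k) :
    μ₁ (n / k) (n / ℓ) = μ (k / ℓ) := by
  have hnk : 0 < n / k := Nat.div_pos (hks.trans n.sqrt_le_self) hk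
  have hsum : ∀ u > 0, u ∈ {u | u ∣ k} →
      ∑ v ∈ u.divisors, μ₁ (n / k) (n / (k / v)) = if u = 1 then 1 else 0 := by
    intro u hu huk
    split_ifs with hu1
    · simp [hu1, hrefl _ hnk]
    have hku : 0 < k / u := Nat.div_pos (Nat.le_of_dvd hk huk) hu
    have hlt : n / k < n / (k / u) :=
      Nat.div_lt_div_of_lt_of_le_sqrt hku (Nat.div_lt_self hk (by omega))
        ((Nat.div_le_self k u).trans hks)
    rw [← FloorQuotient.sum_interval_eq_sum_divisors _ hk hks huk]
    exact hrec _ _ hnk (FloorQuotient.div_of_dvd n hk (Nat.div_dvd_of_dvd huk)) hlt.ne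
  have := eq_moebius_on (fun _ _ => dvd_trans) hsum
    (Nat.div_pos (Nat.le_of_dvd hk hℓk) (Nat.pos_of_dvd_of_pos hℓk hk)) (Nat.div_dvd_of_dvd hℓk)
  rwa [Nat.div_div_self hℓk hk.ne'] at this

open scoped Classical in
theorem mobius_on_upper_interval_general (μ₁ : ℕ → ℕ → ℤ)
    -- defining properties of the Möbius function of the floor quotient order
    (hrefl : ∀ d : ℕ, 0 < d → μ₁ d d = 1)
    (hzero : ∀ d n : ℕ, 0 < d → 0 < n → ¬ FloorQuotient d n → μ₁ d n = 0)
    (hrec : ∀ d n : ℕ, 0 < d → FloorQuotient d n → d ≠ n →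
      ∑ e ∈ (Finset.Icc d n).filter
        (fun e => FloorQuotient d e ∧ FloorQuotient e n), μ₁ d e = 0)
    (n : ℕ) :
    ∀ k ℓ : ℕ, 1 ≤ ℓ → ℓ ≤ k → k ≤ Nat.sqrt n →
      (ℓ ∣ k → μ₁ (n / k) (n / ℓ) = ArithmeticFunction.moebius (k / ℓ)) ∧
      (¬ ℓ ∣ k → μ₁ (n / k) (n / ℓ) = 0) ∧
      |μ₁ (n / k) (n / ℓ)| ≤ 1 := by
  intro k ℓ hℓ hℓk hks
  have hk : 0 < k := hℓ.trans hℓk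
  have hdvd : ℓ ∣ k → μ₁ (n / k) (n / ℓ) = μ (k / ℓ) :=
    floorQuotient_moebius_eq_moebius_div μ₁ hrefl hrec hk hks
  have hndvd : ¬ ℓ ∣ k → μ₁ (n / k) (n / ℓ) = 0 := fun h =>
    hzero _ _ (Nat.div_pos (hks.trans n.sqrt_le_self) hk)
      (Nat.div_pos ((hℓk.trans hks).trans n.sqrt_le_self) hℓ)
      (mt (FloorQuotient.div_iff_dvd hℓ hk hks).1 h)
  refine ⟨hdvd, hndvd, ?_⟩
  by_cases h : ℓ ∣ k
  · rw [hdvd h]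
    exact abs_moebius_le_one
  · rw [hndvd h, abs_zero]
    exact zero_le_one

open scoped Classical in
theorem mobius_on_upper_interval (μ₁ : ℕ → ℕ → ℤ)
    -- defining properties of the Möbius function of the floor quotient order
    (hrefl : ∀ d : ℕ, 0 < d → μ₁ d d = 1)
    (hzero : ∀ d n : ℕ, 0 < d → 0 < n → ¬ FloorQuotient d n → μ₁ d n = 0)
    (hrec : ∀ d n : ℕ, 0 < d → FloorQuotient d n → d ≠ n →
      ∑ e ∈ (Finset.Icc d n).filter
        (fun e => FloorQuotient d e ∧ FloorQuotient e n), μ₁ d e = 0)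
    (n : ℕ) (hn : 0 < n) :
    ∀ k ℓ : ℕ, 1 ≤ ℓ → ℓ ≤ k → k ≤ Nat.sqrt n →
      (ℓ ∣ k → μ₁ (n / k) (n / ℓ) = ArithmeticFunction.moebius (k / ℓ)) ∧
      (¬ ℓ ∣ k → μ₁ (n / k) (n / ℓ) = 0) ∧
      |μ₁ (n / k) (n / ℓ)| ≤ 1 :=
  mobius_on_upper_interval_general μ₁ hrefl hzero hrec n
end
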